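/- Let C ⊆ ℝⁿ be closed and convex, h : C → ℝ continuous and quasiconcave, and K ⊆ C nonempty, closed, convex with (K)^⊥ = {0} (i.e., the only vector w* with ⟨w*, w⟩ = ⟨w*, v⟩ for all w, v ∈ K is 0). If ȳ ∈ K solves the variational inequality VI(N^a_{-h} \ {0}, K), i.e., there exists ȳ* ∈ N^a_{-h}(ȳ) with ȳ* ≠ 0 and ⟨ȳ*, y - ȳ⟩ ≥ 0 for all y ∈ K, then int S^a_{-h}(ȳ) ∩ K = ∅. -/
import Mathlib


open RealInnerProductSpace

/-- Sublevel set of `f` (restricted to `C`) at `w`. -/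
def Slev {n : ℕ} (C : Set (EuclideanSpace ℝ (Fin n))) (f : EuclideanSpace ℝ (Fin n) → ℝ)
    (w : EuclideanSpace ℝ (Fin n)) : Set (EuclideanSpace ℝ (Fin n)) :=
  {v ∈ C | f v ≤ f w}

/-- Strict sublevel set of `f` (restricted to `C`) at `w`. -/
def SlevLt {n : ℕ} (C : Set (EuclideanSpace ℝ (Fin n))) (f : EuclideanSpace ℝ (Fin n) → ℝ)
    (w : EuclideanSpace ℝ (Fin n)) : Set (EuclideanSpace ℝ (Fin n)) :=
  {v ∈ C | f v < f w}

-- Adjusted sublevel set `S^a_f(w)`.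
open Classical in
noncomputable def SlevAdj {n : ℕ} (C : Set (EuclideanSpace ℝ (Fin n)))
    (f : EuclideanSpace ℝ (Fin n) → ℝ) (w : EuclideanSpace ℝ (Fin n)) :
    Set (EuclideanSpace ℝ (Fin n)) :=
  if ∀ v ∈ C, f w ≤ f v then Slev C f w
  else Slev C f w ∩ {x | Metric.infDist x (SlevLt C f w) ≤ Metric.infDist w (SlevLt C f w)}

/-- Adjusted normal operator `N^a_f(w)`. -/
noncomputable def NormAdj {n : ℕ} (C : Set (EuclideanSpace ℝ (Fin n)))
    (f : EuclideanSpace ℝ (Fin n) → ℝ) (w : EuclideanSpace ℝ (Fin n)) :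
    Set (EuclideanSpace ℝ (Fin n)) :=
  {ws | ∀ v ∈ SlevAdj C f w, ⟪ws, v - w⟫ ≤ 0}

/-- If `ȳ` solves `VI(N^a_{-h} \ {0}, K)` with `(K)^⊥ = {0}`, then
`int S^a_{-h}(ȳ) ∩ K = ∅`. -/
theorem stmt_8 (n : ℕ) (C K : Set (EuclideanSpace ℝ (Fin n)))
    (h : EuclideanSpace ℝ (Fin n) → ℝ)
    (hCcl : IsClosed C) (hCcv : Convex ℝ C) (hcont : ContinuousOn h C)
    (hqc : ∀ w ∈ C, ∀ v ∈ C, ∀ t ∈ Set.Icc (0 : ℝ) 1,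
      h (t • w + (1 - t) • v) ≥ min (h w) (h v))
    (hKC : K ⊆ C) (hKne : K.Nonempty) (hKcl : IsClosed K) (hKcv : Convex ℝ K)
    (hperp : ∀ ws : EuclideanSpace ℝ (Fin n),
      (∀ w ∈ K, ∀ v ∈ K, ⟪ws, w⟫ = ⟪ws, v⟫) → ws = 0)
    (ybar : EuclideanSpace ℝ (Fin n)) (hybar : ybar ∈ K)
    (hVI : ∃ ys ∈ NormAdj C (fun x => -h x) ybar, ys ≠ 0 ∧ ∀ y ∈ K, ⟪ys, y - ybar⟫ ≥ 0) :
    interior (SlevAdj C (fun x => -h x) ybar) ∩ K = ∅ := by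
  rw [Set.eq_empty_iff_forall_notMem]
  rintro x ⟨hxi, hxK⟩
  obtain ⟨ys, hN, hne, hvi⟩ := hVI
  have h1 : (0 : ℝ) ≤ ⟪ys, x - ybar⟫ := hvi x hxK
  have h2 : ⟪ys, x - ybar⟫ ≤ 0 := hN x (interior_subset hxi)
  have heq : ⟪ys, x - ybar⟫ = 0 := le_antisymm h2 h1
  obtain ⟨ε, hε, hball⟩ := Metric.isOpen_iff.mp isOpen_interior x hxi
  have hns : (0 : ℝ) < ‖ys‖ := norm_pos_iff.mpr hne
  set t : ℝ := ε / (2 * ‖ys‖) with ht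
  have htpos : 0 < t := div_pos hε (by positivity)
  have hmem : x + t • ys ∈ SlevAdj C (fun x => -h x) ybar := by
    apply interior_subset
    apply hball
    rw [Metric.mem_ball, dist_eq_norm]
    have : x + t • ys - x = t • ys := by abel
    rw [this, norm_smul, Real.norm_eq_abs, abs_of_pos htpos, ht]
    rw [div_mul_eq_mul_div, mul_comm]
    rw [div_lt_iff₀ (by positivity)]
    nlinarith
  have h3 : ⟪ys, x + t • ys - ybar⟫ ≤ 0 := hN _ hmem
  have hdecomp : x + t • ys - ybar = (x - ybar) + t • ys := by abel
  rw [hdecomp, inner_add_right, real_inner_smul_right, heq,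
    real_inner_self_eq_norm_sq] at h3
  nlinarith [mul_pos htpos (pow_pos hns 2)]
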